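/- The system of equations −5√2 + 24t₁ − 2λt₁ + 3√10 t₃ = 0, 9√6 + 24t₂ − 2λt₂ + √30 t₃ = 0, 6√5 + 3√10 t₁ + √30 t₂ − 10t₃ − 2λt₃ = 0, t₁² + t₂² + t₃² = 1 has exactly two real solutions (t₁,t₂,t₃,λ); in particular both satisfy t₂ > 0.9 or t₂ < −0.3 approximately, so neither lies in the region of the octagon 𝓔. -/
import Mathlib
set_option maxHeartbeats 2000000

/-- The Lagrange multiplier system for critical points of the equation of
`𝓑_{0̄} ∩ ∂_∞𝓒` restricted to the unit sphere; coordinates `(t₁, t₂, t₃, λ)`. -/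
def lagrangeSystem (x : ℝ × ℝ × ℝ × ℝ) : Prop :=
  -5 * Real.sqrt 2 + 24 * x.1 - 2 * x.2.2.2 * x.1 + 3 * Real.sqrt 10 * x.2.2.1 = 0 ∧
  9 * Real.sqrt 6 + 24 * x.2.1 - 2 * x.2.2.2 * x.2.1 + Real.sqrt 30 * x.2.2.1 = 0 ∧
  6 * Real.sqrt 5 + 3 * Real.sqrt 10 * x.1 + Real.sqrt 30 * x.2.1 - 10 * x.2.2.1
    - 2 * x.2.2.2 * x.2.2.1 = 0 ∧
  x.1 ^ 2 + x.2.1 ^ 2 + x.2.2.1 ^ 2 = 1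

def pp (x : ℝ) : ℝ :=
  x^6 - 68*x^5 + 200*x^4 + 47488*x^3 - 555776*x^2 - 4177920*x - 7372800

lemma pp_pos_left {x : ℝ} (h : x ≤ -25.1) : 0 < pp x := by
  have b : (0:ℝ) ≤ -25.1 - x := by linarith
  unfold pp
  nlinarith [pow_nonneg b 2, pow_nonneg b 3, pow_nonneg b 4, pow_nonneg b 5, pow_nonneg b 6]

lemma pp_pos_right {x : ℝ} (h : 50.3 ≤ x) : 0 < pp x := by
  have b : (0:ℝ) ≤ x - 50.3 := by linarith
  unfold pp
  nlinarith [pow_nonneg b 2, pow_nonneg b 3, pow_nonneg b 4, pow_nonneg b 5, pow_nonneg b 6]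

lemma pp_neg_seg {x l u : ℝ} (h1 : l ≤ x) (h2 : x ≤ u)
    (hseg : (l = -25 ∧ u = -6.2) ∨ (l = -6.2 ∧ u = -1.5) ∨ (l = -1.5 ∧ u = 3.2) ∨
      (l = 3.2 ∧ u = 12.6) ∨ (l = 12.6 ∧ u = 31.4) ∨ (l = 31.4 ∧ u = 50.2)) :
    pp x < 0 := by
  have a : (0:ℝ) ≤ x - l := by linarith
  have b : (0:ℝ) ≤ u - x := by linarith
  unfold pp
  rcases hseg with ⟨rfl, rfl⟩ | ⟨rfl, rfl⟩ | ⟨rfl, rfl⟩ | ⟨rfl, rfl⟩ | ⟨rfl, rfl⟩ | ⟨rfl, rfl⟩ <;>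
    nlinarith [mul_nonneg (pow_nonneg a 0) (pow_nonneg b 6), mul_nonneg (pow_nonneg a 1) (pow_nonneg b 5), mul_nonneg (pow_nonneg a 2) (pow_nonneg b 4), mul_nonneg (pow_nonneg a 3) (pow_nonneg b 3), mul_nonneg (pow_nonneg a 4) (pow_nonneg b 2), mul_nonneg (pow_nonneg a 5) (pow_nonneg b 1), mul_nonneg (pow_nonneg a 6) (pow_nonneg b 0)]

lemma pp_neg_mid {x : ℝ} (h1 : -25 ≤ x) (h2 : x ≤ 50.2) : pp x < 0 := by
  rcases le_total x (-6.2) with h | h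
  · exact pp_neg_seg h1 h (by norm_num)
  rcases le_total x (-1.5) with h' | h'
  · exact pp_neg_seg h h' (by norm_num)
  rcases le_total x 3.2 with h'' | h''
  · exact pp_neg_seg h' h'' (by norm_num)
  rcases le_total x 12.6 with h3 | h3
  · exact pp_neg_seg h'' h3 (by norm_num)
  rcases le_total x 31.4 with h4 | h4
  · exact pp_neg_seg h3 h4 (by norm_num)
  · exact pp_neg_seg h4 h2 (by norm_num)

lemma pp_inj_box {x y l u : ℝ} (hx1 : l ≤ x) (hx2 : x ≤ u) (hy1 : l ≤ y) (hy2 : y ≤ u)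
    (hbox : (l = -25.1 ∧ u = -25) ∨ (l = 50.2 ∧ u = 50.3))
    (hpx : pp x = 0) (hpy : pp y = 0) : x = y := by
  have a1 : (0:ℝ) ≤ x - l := by linarith
  have a2 : (0:ℝ) ≤ u - x := by linarith
  have b1 : (0:ℝ) ≤ y - l := by linarith
  have b2 : (0:ℝ) ≤ u - y := by linarith
  have key : (x - y) * ((-4177920) + (-555776)*y + (-555776)*x + (47488)*y^2 + (47488)*x*y + (47488)*x^2 + (200)*y^3 + (200)*x*y^2 + (200)*x^2*y + (200)*x^3 + (-68)*y^4 + (-68)*x*y^3 + (-68)*x^2*y^2 + (-68)*x^3*y + (-68)*x^4 + (1)*y^5 + (1)*x*y^4 + (1)*x^2*y^3 + (1)*x^3*y^2 + (1)*x^4*y + (1)*x^5) = 0 := by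
    unfold pp at hpx hpy
    linear_combination hpx - hpy
  have hQ : ((-4177920:ℝ) + (-555776)*y + (-555776)*x + (47488)*y^2 + (47488)*x*y + (47488)*x^2 + (200)*y^3 + (200)*x*y^2 + (200)*x^2*y + (200)*x^3 + (-68)*y^4 + (-68)*x*y^3 + (-68)*x^2*y^2 + (-68)*x^3*y + (-68)*x^4 + (1)*y^5 + (1)*x*y^4 + (1)*x^2*y^3 + (1)*x^3*y^2 + (1)*x^4*y + (1)*x^5) ≠ 0 := by
    rcases hbox with ⟨rfl, rfl⟩ | ⟨rfl, rfl⟩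
    · apply ne_of_lt
      linarith [mul_nonneg (mul_nonneg (pow_nonneg a1 0) (pow_nonneg a2 5)) (mul_nonneg (pow_nonneg b1 0) (pow_nonneg b2 5)),
    mul_nonneg (mul_nonneg (pow_nonneg a1 0) (pow_nonneg a2 5)) (mul_nonneg (pow_nonneg b1 1) (pow_nonneg b2 4)),
    mul_nonneg (mul_nonneg (pow_nonneg a1 0) (pow_nonneg a2 5)) (mul_nonneg (pow_nonneg b1 2) (pow_nonneg b2 3)),
    mul_nonneg (mul_nonneg (pow_nonneg a1 0) (pow_nonneg a2 5)) (mul_nonneg (pow_nonneg b1 3) (pow_nonneg b2 2)),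
    mul_nonneg (mul_nonneg (pow_nonneg a1 0) (pow_nonneg a2 5)) (mul_nonneg (pow_nonneg b1 4) (pow_nonneg b2 1)),
    mul_nonneg (mul_nonneg (pow_nonneg a1 0) (pow_nonneg a2 5)) (mul_nonneg (pow_nonneg b1 5) (pow_nonneg b2 0)),
    mul_nonneg (mul_nonneg (pow_nonneg a1 1) (pow_nonneg a2 4)) (mul_nonneg (pow_nonneg b1 0) (pow_nonneg b2 5)),
    mul_nonneg (mul_nonneg (pow_nonneg a1 1) (pow_nonneg a2 4)) (mul_nonneg (pow_nonneg b1 1) (pow_nonneg b2 4)),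
    mul_nonneg (mul_nonneg (pow_nonneg a1 1) (pow_nonneg a2 4)) (mul_nonneg (pow_nonneg b1 2) (pow_nonneg b2 3)),
    mul_nonneg (mul_nonneg (pow_nonneg a1 1) (pow_nonneg a2 4)) (mul_nonneg (pow_nonneg b1 3) (pow_nonneg b2 2)),
    mul_nonneg (mul_nonneg (pow_nonneg a1 1) (pow_nonneg a2 4)) (mul_nonneg (pow_nonneg b1 4) (pow_nonneg b2 1)),
    mul_nonneg (mul_nonneg (pow_nonneg a1 1) (pow_nonneg a2 4)) (mul_nonneg (pow_nonneg b1 5) (pow_nonneg b2 0)),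
    mul_nonneg (mul_nonneg (pow_nonneg a1 2) (pow_nonneg a2 3)) (mul_nonneg (pow_nonneg b1 0) (pow_nonneg b2 5)),
    mul_nonneg (mul_nonneg (pow_nonneg a1 2) (pow_nonneg a2 3)) (mul_nonneg (pow_nonneg b1 1) (pow_nonneg b2 4)),
    mul_nonneg (mul_nonneg (pow_nonneg a1 2) (pow_nonneg a2 3)) (mul_nonneg (pow_nonneg b1 2) (pow_nonneg b2 3)),
    mul_nonneg (mul_nonneg (pow_nonneg a1 2) (pow_nonneg a2 3)) (mul_nonneg (pow_nonneg b1 3) (pow_nonneg b2 2)),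
    mul_nonneg (mul_nonneg (pow_nonneg a1 2) (pow_nonneg a2 3)) (mul_nonneg (pow_nonneg b1 4) (pow_nonneg b2 1)),
    mul_nonneg (mul_nonneg (pow_nonneg a1 2) (pow_nonneg a2 3)) (mul_nonneg (pow_nonneg b1 5) (pow_nonneg b2 0)),
    mul_nonneg (mul_nonneg (pow_nonneg a1 3) (pow_nonneg a2 2)) (mul_nonneg (pow_nonneg b1 0) (pow_nonneg b2 5)),
    mul_nonneg (mul_nonneg (pow_nonneg a1 3) (pow_nonneg a2 2)) (mul_nonneg (pow_nonneg b1 1) (pow_nonneg b2 4)),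
    mul_nonneg (mul_nonneg (pow_nonneg a1 3) (pow_nonneg a2 2)) (mul_nonneg (pow_nonneg b1 2) (pow_nonneg b2 3)),
    mul_nonneg (mul_nonneg (pow_nonneg a1 3) (pow_nonneg a2 2)) (mul_nonneg (pow_nonneg b1 3) (pow_nonneg b2 2)),
    mul_nonneg (mul_nonneg (pow_nonneg a1 3) (pow_nonneg a2 2)) (mul_nonneg (pow_nonneg b1 4) (pow_nonneg b2 1)),
    mul_nonneg (mul_nonneg (pow_nonneg a1 3) (pow_nonneg a2 2)) (mul_nonneg (pow_nonneg b1 5) (pow_nonneg b2 0)),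
    mul_nonneg (mul_nonneg (pow_nonneg a1 4) (pow_nonneg a2 1)) (mul_nonneg (pow_nonneg b1 0) (pow_nonneg b2 5)),
    mul_nonneg (mul_nonneg (pow_nonneg a1 4) (pow_nonneg a2 1)) (mul_nonneg (pow_nonneg b1 1) (pow_nonneg b2 4)),
    mul_nonneg (mul_nonneg (pow_nonneg a1 4) (pow_nonneg a2 1)) (mul_nonneg (pow_nonneg b1 2) (pow_nonneg b2 3)),
    mul_nonneg (mul_nonneg (pow_nonneg a1 4) (pow_nonneg a2 1)) (mul_nonneg (pow_nonneg b1 3) (pow_nonneg b2 2)),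
    mul_nonneg (mul_nonneg (pow_nonneg a1 4) (pow_nonneg a2 1)) (mul_nonneg (pow_nonneg b1 4) (pow_nonneg b2 1)),
    mul_nonneg (mul_nonneg (pow_nonneg a1 4) (pow_nonneg a2 1)) (mul_nonneg (pow_nonneg b1 5) (pow_nonneg b2 0)),
    mul_nonneg (mul_nonneg (pow_nonneg a1 5) (pow_nonneg a2 0)) (mul_nonneg (pow_nonneg b1 0) (pow_nonneg b2 5)),
    mul_nonneg (mul_nonneg (pow_nonneg a1 5) (pow_nonneg a2 0)) (mul_nonneg (pow_nonneg b1 1) (pow_nonneg b2 4)),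
    mul_nonneg (mul_nonneg (pow_nonneg a1 5) (pow_nonneg a2 0)) (mul_nonneg (pow_nonneg b1 2) (pow_nonneg b2 3)),
    mul_nonneg (mul_nonneg (pow_nonneg a1 5) (pow_nonneg a2 0)) (mul_nonneg (pow_nonneg b1 3) (pow_nonneg b2 2)),
    mul_nonneg (mul_nonneg (pow_nonneg a1 5) (pow_nonneg a2 0)) (mul_nonneg (pow_nonneg b1 4) (pow_nonneg b2 1)),
    mul_nonneg (mul_nonneg (pow_nonneg a1 5) (pow_nonneg a2 0)) (mul_nonneg (pow_nonneg b1 5) (pow_nonneg b2 0))]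
    · apply ne_of_gt
      linarith [mul_nonneg (mul_nonneg (pow_nonneg a1 0) (pow_nonneg a2 5)) (mul_nonneg (pow_nonneg b1 0) (pow_nonneg b2 5)),
    mul_nonneg (mul_nonneg (pow_nonneg a1 0) (pow_nonneg a2 5)) (mul_nonneg (pow_nonneg b1 1) (pow_nonneg b2 4)),
    mul_nonneg (mul_nonneg (pow_nonneg a1 0) (pow_nonneg a2 5)) (mul_nonneg (pow_nonneg b1 2) (pow_nonneg b2 3)),
    mul_nonneg (mul_nonneg (pow_nonneg a1 0) (pow_nonneg a2 5)) (mul_nonneg (pow_nonneg b1 3) (pow_nonneg b2 2)),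
    mul_nonneg (mul_nonneg (pow_nonneg a1 0) (pow_nonneg a2 5)) (mul_nonneg (pow_nonneg b1 4) (pow_nonneg b2 1)),
    mul_nonneg (mul_nonneg (pow_nonneg a1 0) (pow_nonneg a2 5)) (mul_nonneg (pow_nonneg b1 5) (pow_nonneg b2 0)),
    mul_nonneg (mul_nonneg (pow_nonneg a1 1) (pow_nonneg a2 4)) (mul_nonneg (pow_nonneg b1 0) (pow_nonneg b2 5)),
    mul_nonneg (mul_nonneg (pow_nonneg a1 1) (pow_nonneg a2 4)) (mul_nonneg (pow_nonneg b1 1) (pow_nonneg b2 4)),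
    mul_nonneg (mul_nonneg (pow_nonneg a1 1) (pow_nonneg a2 4)) (mul_nonneg (pow_nonneg b1 2) (pow_nonneg b2 3)),
    mul_nonneg (mul_nonneg (pow_nonneg a1 1) (pow_nonneg a2 4)) (mul_nonneg (pow_nonneg b1 3) (pow_nonneg b2 2)),
    mul_nonneg (mul_nonneg (pow_nonneg a1 1) (pow_nonneg a2 4)) (mul_nonneg (pow_nonneg b1 4) (pow_nonneg b2 1)),
    mul_nonneg (mul_nonneg (pow_nonneg a1 1) (pow_nonneg a2 4)) (mul_nonneg (pow_nonneg b1 5) (pow_nonneg b2 0)),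
    mul_nonneg (mul_nonneg (pow_nonneg a1 2) (pow_nonneg a2 3)) (mul_nonneg (pow_nonneg b1 0) (pow_nonneg b2 5)),
    mul_nonneg (mul_nonneg (pow_nonneg a1 2) (pow_nonneg a2 3)) (mul_nonneg (pow_nonneg b1 1) (pow_nonneg b2 4)),
    mul_nonneg (mul_nonneg (pow_nonneg a1 2) (pow_nonneg a2 3)) (mul_nonneg (pow_nonneg b1 2) (pow_nonneg b2 3)),
    mul_nonneg (mul_nonneg (pow_nonneg a1 2) (pow_nonneg a2 3)) (mul_nonneg (pow_nonneg b1 3) (pow_nonneg b2 2)),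
    mul_nonneg (mul_nonneg (pow_nonneg a1 2) (pow_nonneg a2 3)) (mul_nonneg (pow_nonneg b1 4) (pow_nonneg b2 1)),
    mul_nonneg (mul_nonneg (pow_nonneg a1 2) (pow_nonneg a2 3)) (mul_nonneg (pow_nonneg b1 5) (pow_nonneg b2 0)),
    mul_nonneg (mul_nonneg (pow_nonneg a1 3) (pow_nonneg a2 2)) (mul_nonneg (pow_nonneg b1 0) (pow_nonneg b2 5)),
    mul_nonneg (mul_nonneg (pow_nonneg a1 3) (pow_nonneg a2 2)) (mul_nonneg (pow_nonneg b1 1) (pow_nonneg b2 4)),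
    mul_nonneg (mul_nonneg (pow_nonneg a1 3) (pow_nonneg a2 2)) (mul_nonneg (pow_nonneg b1 2) (pow_nonneg b2 3)),
    mul_nonneg (mul_nonneg (pow_nonneg a1 3) (pow_nonneg a2 2)) (mul_nonneg (pow_nonneg b1 3) (pow_nonneg b2 2)),
    mul_nonneg (mul_nonneg (pow_nonneg a1 3) (pow_nonneg a2 2)) (mul_nonneg (pow_nonneg b1 4) (pow_nonneg b2 1)),
    mul_nonneg (mul_nonneg (pow_nonneg a1 3) (pow_nonneg a2 2)) (mul_nonneg (pow_nonneg b1 5) (pow_nonneg b2 0)),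
    mul_nonneg (mul_nonneg (pow_nonneg a1 4) (pow_nonneg a2 1)) (mul_nonneg (pow_nonneg b1 0) (pow_nonneg b2 5)),
    mul_nonneg (mul_nonneg (pow_nonneg a1 4) (pow_nonneg a2 1)) (mul_nonneg (pow_nonneg b1 1) (pow_nonneg b2 4)),
    mul_nonneg (mul_nonneg (pow_nonneg a1 4) (pow_nonneg a2 1)) (mul_nonneg (pow_nonneg b1 2) (pow_nonneg b2 3)),
    mul_nonneg (mul_nonneg (pow_nonneg a1 4) (pow_nonneg a2 1)) (mul_nonneg (pow_nonneg b1 3) (pow_nonneg b2 2)),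
    mul_nonneg (mul_nonneg (pow_nonneg a1 4) (pow_nonneg a2 1)) (mul_nonneg (pow_nonneg b1 4) (pow_nonneg b2 1)),
    mul_nonneg (mul_nonneg (pow_nonneg a1 4) (pow_nonneg a2 1)) (mul_nonneg (pow_nonneg b1 5) (pow_nonneg b2 0)),
    mul_nonneg (mul_nonneg (pow_nonneg a1 5) (pow_nonneg a2 0)) (mul_nonneg (pow_nonneg b1 0) (pow_nonneg b2 5)),
    mul_nonneg (mul_nonneg (pow_nonneg a1 5) (pow_nonneg a2 0)) (mul_nonneg (pow_nonneg b1 1) (pow_nonneg b2 4)),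
    mul_nonneg (mul_nonneg (pow_nonneg a1 5) (pow_nonneg a2 0)) (mul_nonneg (pow_nonneg b1 2) (pow_nonneg b2 3)),
    mul_nonneg (mul_nonneg (pow_nonneg a1 5) (pow_nonneg a2 0)) (mul_nonneg (pow_nonneg b1 3) (pow_nonneg b2 2)),
    mul_nonneg (mul_nonneg (pow_nonneg a1 5) (pow_nonneg a2 0)) (mul_nonneg (pow_nonneg b1 4) (pow_nonneg b2 1)),
    mul_nonneg (mul_nonneg (pow_nonneg a1 5) (pow_nonneg a2 0)) (mul_nonneg (pow_nonneg b1 5) (pow_nonneg b2 0))]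
  rcases mul_eq_zero.mp key with h | h
  · linarith
  · exact absurd h hQ

lemma pp_cont : Continuous pp := by unfold pp; fun_prop

lemma pp_ex_left : ∃ x : ℝ, -25.1 < x ∧ x < -25 ∧ pp x = 0 := by
  have hmem : (0:ℝ) ∈ Set.Icc (pp (-25)) (pp (-25.1)) := by
    constructor <;> (unfold pp; norm_num)
  obtain ⟨x, hx, hpx⟩ :=
    intermediate_value_Icc' (by norm_num : (-25.1:ℝ) ≤ -25) pp_cont.continuousOn hmem
  refine ⟨x, lt_of_le_of_ne hx.1 ?_, lt_of_le_of_ne hx.2 ?_, hpx⟩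
  · intro h; rw [← h] at hpx; unfold pp at hpx; norm_num at hpx
  · intro h; rw [h] at hpx; unfold pp at hpx; norm_num at hpx

lemma pp_ex_right : ∃ x : ℝ, 50.2 < x ∧ x < 50.3 ∧ pp x = 0 := by
  have hmem : (0:ℝ) ∈ Set.Icc (pp 50.2) (pp 50.3) := by
    constructor <;> (unfold pp; norm_num)
  obtain ⟨x, hx, hpx⟩ :=
    intermediate_value_Icc (by norm_num : (50.2:ℝ) ≤ 50.3) pp_cont.continuousOn hmem
  refine ⟨x, lt_of_le_of_ne hx.1 ?_, lt_of_le_of_ne hx.2 ?_, hpx⟩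
  · intro h; rw [← h] at hpx; unfold pp at hpx; norm_num at hpx
  · intro h; rw [h] at hpx; unfold pp at hpx; norm_num at hpx

lemma pp_root_loc {x : ℝ} (h : pp x = 0) :
    (-25.1 < x ∧ x < -25) ∨ (50.2 < x ∧ x < 50.3) := by
  rcases le_or_gt x (-25.1) with hc | hc
  · exact absurd h.symm (ne_of_lt (pp_pos_left hc))
  rcases le_or_gt x (-25) with hd | hd
  · left
    refine ⟨hc, lt_of_le_of_ne hd ?_⟩
    intro he; rw [he] at h; unfold pp at h; norm_num at h
  rcases le_or_gt x 50.2 with he | he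
  · exact absurd h (ne_of_lt (pp_neg_mid (le_of_lt hd) he))
  rcases lt_or_ge x 50.3 with hf | hf
  · exact Or.inr ⟨he, hf⟩
  · exact absurd h.symm (ne_of_lt (pp_pos_right hf))

noncomputable def sol (m : ℝ) : ℝ × ℝ × ℝ × ℝ :=
  (Real.sqrt 2 * (5 - 15 * ((24 - 6*m) / (m^2 - 34*m - 120))) / m,
   Real.sqrt 6 * (-9 - 5 * ((24 - 6*m) / (m^2 - 34*m - 120))) / m,
   Real.sqrt 5 * ((24 - 6*m) / (m^2 - 34*m - 120)),
   (24 - m) / 2)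

lemma D_pos {m : ℝ} (h : (-25.1 < m ∧ m < -25) ∨ (50.2 < m ∧ m < 50.3)) :
    0 < m^2 - 34*m - 120 := by
  rcases h with ⟨h1, h2⟩ | ⟨h1, h2⟩
  · nlinarith [mul_pos (show (0:ℝ) < -(m+4) by linarith) (show (0:ℝ) < -(m-38) by linarith)]
  · nlinarith [mul_pos (show (0:ℝ) < m+4 by linarith) (show (0:ℝ) < m-38 by linarith)]

lemma forward_aux {s2 s5 s6 t1 t2 t3 m : ℝ} (hs2 : s2^2 = 2) (hs5 : s5^2 = 5) (hs6 : s6^2 = 6)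
    (h1 : -5*s2 + m*t1 + 3*(s2*s5)*t3 = 0)
    (h2 : 9*s6 + m*t2 + (s6*s5)*t3 = 0)
    (h3 : 6*s5 + 3*(s2*s5)*t1 + (s6*s5)*t2 - (34-m)*t3 = 0)
    (h4 : t1^2 + t2^2 + t3^2 = 1) :
    t3*(m^2 - 34*m - 120) = s5*(24 - 6*m) ∧ pp m = 0 := by
  have hG : t3*(m^2 - 34*m - 120) = s5*(24 - 6*m) := by
    linear_combination m*h3 - 3*(s2*s5)*h1 - (s6*s5)*h2 + (-15*s5 + 9*s5^2*t3)*hs2 +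
      (18*t3 + s6^2*t3)*hs5 + (5*t3 + 9*s5)*hs6
  have hH : 536 + 48*s5*t3 + 120*t3^2 + m^2*t3^2 = m^2 := by
    linear_combination m^2*h4 - (m*t1 + 5*s2 - 3*(s2*s5)*t3)*h1 - (m*t2 - 9*s6 - (s6*s5)*t3)*h2 +
      (-25 + 30*s5*t3 - 9*s5^2*t3^2)*hs2 + (-18*t3^2 - s6^2*t3^2)*hs5 +
      (-81 - 5*t3^2 - 18*s5*t3)*hs6
  refine ⟨hG, ?_⟩
  unfold pp
  linear_combination (-((m^2-34*m-120)^2))*hH +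
    (48*s5*(m^2-34*m-120) + (120+m^2)*(2*s5*(24-6*m) + (t3*(m^2-34*m-120) - s5*(24-6*m))))*hG +
    (36*m^4 - 576*m^3 + 15840*m^2 - 39168*m - 69120)*hs5


lemma sqrt10_eq : Real.sqrt 10 = Real.sqrt 2 * Real.sqrt 5 := by
  rw [show (10:ℝ) = 2*5 by norm_num, Real.sqrt_mul (by norm_num)]

lemma sqrt30_eq : Real.sqrt 30 = Real.sqrt 6 * Real.sqrt 5 := by
  rw [show (30:ℝ) = 6*5 by norm_num, Real.sqrt_mul (by norm_num)]


lemma forward_eq {t1 t2 t3 l m : ℝ} (hm : m = 24 - 2*l)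
    (hD : m^2 - 34*m - 120 ≠ 0) (hm0 : m ≠ 0)
    (h1 : -5*Real.sqrt 2 + m*t1 + 3*(Real.sqrt 2*Real.sqrt 5)*t3 = 0)
    (h2 : 9*Real.sqrt 6 + m*t2 + (Real.sqrt 6*Real.sqrt 5)*t3 = 0)
    (hG : t3*(m^2 - 34*m - 120) = Real.sqrt 5*(24 - 6*m)) :
    ((t1, t2, t3, l) : ℝ × ℝ × ℝ × ℝ) = sol m := by
  have hs5 : Real.sqrt 5 ^ 2 = 5 := Real.sq_sqrt (by norm_num)
  unfold sol
  set s2 := Real.sqrt 2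
  set s5 := Real.sqrt 5
  set s6 := Real.sqrt 6
  set cc := (24 - 6*m) / (m^2 - 34*m - 120) with hcc0
  have hcc : cc*(m^2 - 34*m - 120) = 24 - 6*m := by
    rw [hcc0]; exact div_mul_cancel₀ _ hD
  have ht3 : t3 = s5*cc := by
    apply mul_right_cancel₀ hD
    linear_combination hG - s5*hcc
  have ht1 : t1 = s2*(5 - 15*cc)/m := by
    rw [eq_div_iff hm0]
    linear_combination h1 + (-3*(s2*s5))*ht3 + (-3*s2*cc)*hs5
  have ht2 : t2 = s6*(-9 - 5*cc)/m := by
    rw [eq_div_iff hm0]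
    linear_combination h2 + (-(s6*s5))*ht3 + (-(s6*cc))*hs5
  simp only [Prod.mk.injEq]
  exact ⟨ht1, ht2, ht3, by linarith [hm]⟩

lemma sol_sat {m : ℝ} (hbox : (-25.1 < m ∧ m < -25) ∨ (50.2 < m ∧ m < 50.3))
    (hp : pp m = 0) : lagrangeSystem (sol m) := by
  have hD := D_pos hbox
  have hDne : m^2 - 34*m - 120 ≠ 0 := ne_of_gt hD
  have hm0 : m ≠ 0 := by
    rcases hbox with ⟨u, v⟩ | ⟨u, v⟩
    · intro hz; rw [hz] at v; norm_num at v
    · intro hz; rw [hz] at u; norm_num at u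
  have hs2 : Real.sqrt 2 ^ 2 = 2 := Real.sq_sqrt (by norm_num)
  have hs5 : Real.sqrt 5 ^ 2 = 5 := Real.sq_sqrt (by norm_num)
  have hs6 : Real.sqrt 6 ^ 2 = 6 := Real.sq_sqrt (by norm_num)
  unfold lagrangeSystem sol
  rw [sqrt10_eq, sqrt30_eq]
  dsimp only
  set s2 := Real.sqrt 2
  set s5 := Real.sqrt 5
  set s6 := Real.sqrt 6
  set cc := (24 - 6*m) / (m^2 - 34*m - 120) with hcc0
  have hcc : cc*(m^2 - 34*m - 120) = 24 - 6*m := by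
    rw [hcc0]; exact div_mul_cancel₀ _ hDne
  have ht1 : m*(s2*(5 - 15*cc)/m) = s2*(5 - 15*cc) := by field_simp
  have ht2 : m*(s6*(-9 - 5*cc)/m) = s6*(-9 - 5*cc) := by field_simp
  unfold pp at hp
  refine ⟨?_, ?_, ?_, ?_⟩
  · linear_combination ht1 + (3*s2*cc)*hs5
  · linear_combination ht2 + (s6*cc)*hs5
  · have hg3 : m * (6*s5 + 3*(s2*s5)*(s2*(5 - 15*cc)/m) + (s6*s5)*(s6*(-9 - 5*cc)/m)
        - 10*(s5*cc) - 2*((24 - m)/2)*(s5*cc)) = 0 := by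
      linear_combination (3*(s2*s5))*ht1 + (s6*s5)*ht2 + s5*hcc +
        (15*s5 - 45*s5*cc)*hs2 + (-9*s5 - 5*s5*cc)*hs6
    have := mul_eq_zero.mp hg3
    rcases this with h | h
    · exact absurd h hm0
    · linear_combination h
  · have hRD : (m^2-34*m-120)^2*(2*(5-15*cc)^2 + 6*(9+5*cc)^2 + 5*m^2*cc^2 - m^2) = 0 := by
      linear_combination (-14400 - 11760*m + 360*m^2 - 30*m^3 - 72000*cc - 20400*cc*m
        - 170*cc*m^3 + 5*cc*m^4)*hcc - hp
    have hg4 : ((m^2-34*m-120)^2*m^2) * ((s2*(5 - 15*cc)/m)^2 + (s6*(-9 - 5*cc)/m)^2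
        + (s5*cc)^2 - 1) = 0 := by
      linear_combination ((m^2-34*m-120)^2*(m*(s2*(5 - 15*cc)/m) + s2*(5-15*cc)))*ht1 +
        ((m^2-34*m-120)^2*(m*(s6*(-9 - 5*cc)/m) + s6*(-9-5*cc)))*ht2 + hRD +
        ((5-15*cc)^2*(m^2-34*m-120)^2)*hs2 + (cc^2*m^2*(m^2-34*m-120)^2)*hs5 +
        ((9+5*cc)^2*(m^2-34*m-120)^2)*hs6
    have hne : ((m^2-34*m-120)^2*m^2) ≠ 0 :=
      mul_ne_zero (pow_ne_zero 2 hDne) (pow_ne_zero 2 hm0)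
    have := (mul_eq_zero.mp hg4).resolve_left hne
    linarith [this]

lemma s6_lb : 2.449 < Real.sqrt 6 := by
  nlinarith [Real.sq_sqrt (show (0:ℝ) ≤ 6 by norm_num), Real.sqrt_nonneg 6]

lemma bound_left {m : ℝ} (h1 : -25.1 < m) (h2 : m < -25) : 0.9 < (sol m).2.1 := by
  have hD := D_pos (Or.inl ⟨h1, h2⟩)
  show 0.9 < Real.sqrt 6 * (-9 - 5 * ((24 - 6*m) / (m^2 - 34*m - 120))) / m
  set s6 := Real.sqrt 6
  set cc := (24 - 6*m) / (m^2 - 34*m - 120) with hcc0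
  have hDub : m^2 - 34*m - 120 < 1363.41 := by nlinarith [mul_pos (show (0:ℝ) < m + 25.1 by linarith) (show (0:ℝ) < 59.1 - m by linarith)]
  have hDlb : 1355 < m^2 - 34*m - 120 := by nlinarith [mul_pos (show (0:ℝ) < -(m + 25) by linarith) (show (0:ℝ) < -(m - 59) by linarith)]
  have hccub : cc ≤ 0.129 := by
    rw [hcc0, div_le_iff₀ hD]; nlinarith
  have hcclb : 0.127 ≤ cc := by
    rw [hcc0, le_div_iff₀ hD]; nlinarith
  rw [lt_div_iff_of_neg (show m < 0 by linarith)]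
  have hX : -9 - 5*cc ≤ -9.635 := by linarith
  have key : (-9 - 5*cc)*(s6 - 2.449) < 0 :=
    mul_neg_of_neg_of_pos (by linarith) (by linarith [s6_lb])
  nlinarith [key]

lemma bound_right {m : ℝ} (h1 : 50.2 < m) (h2 : m < 50.3) : (sol m).2.1 < -0.3 := by
  have hD := D_pos (Or.inr ⟨h1, h2⟩)
  show Real.sqrt 6 * (-9 - 5 * ((24 - 6*m) / (m^2 - 34*m - 120))) / m < -0.3
  set s6 := Real.sqrt 6
  set cc := (24 - 6*m) / (m^2 - 34*m - 120) with hcc0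
  have hDub : m^2 - 34*m - 120 < 699.89 := by nlinarith [mul_pos (show (0:ℝ) < m - 50.2 by linarith) (show (0:ℝ) < m + 16.3 by linarith), mul_pos (show (0:ℝ) < 50.3 - m by linarith) (show (0:ℝ) < m + 16.3 by linarith)]
  have hDlb : 693.24 < m^2 - 34*m - 120 := by nlinarith [mul_pos (show (0:ℝ) < m - 50.2 by linarith) (show (0:ℝ) < m + 16.2 by linarith)]
  have hccub : cc ≤ -0.396 := by
    rw [hcc0, div_le_iff₀ hD]; nlinarith
  have hcclb : -0.401 ≤ cc := by
    rw [hcc0, le_div_iff₀ hD]; nlinarith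
  rw [div_lt_iff₀ (show (0:ℝ) < m by linarith)]
  have hX : -9 - 5*cc ≤ -6.995 := by linarith
  have key : (-9 - 5*cc)*(s6 - 2.449) < 0 :=
    mul_neg_of_neg_of_pos (by linarith) (by linarith [s6_lb])
  nlinarith [key]

theorem stmt18 :
    ∃ a b : ℝ × ℝ × ℝ × ℝ, a ≠ b ∧
      (∀ x, lagrangeSystem x ↔ x = a ∨ x = b) ∧
      (∀ x, lagrangeSystem x → 0.9 < x.2.1 ∨ x.2.1 < -0.3) := by
  obtain ⟨r1, h11, h12, hp1⟩ := pp_ex_left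
  obtain ⟨r2, h21, h22, hp2⟩ := pp_ex_right
  have hb1 : 0.9 < (sol r1).2.1 := bound_left h11 h12
  have hb2 : (sol r2).2.1 < -0.3 := bound_right h21 h22
  have hsat1 : lagrangeSystem (sol r1) := sol_sat (Or.inl ⟨h11, h12⟩) hp1
  have hsat2 : lagrangeSystem (sol r2) := sol_sat (Or.inr ⟨h21, h22⟩) hp2
  have hfwd : ∀ x, lagrangeSystem x → x = sol r1 ∨ x = sol r2 := by
    rintro ⟨t1, t2, t3, l⟩ hx
    simp only [lagrangeSystem] at hx
    obtain ⟨e1, e2, e3, e4⟩ := hx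
    rw [sqrt10_eq] at e1 e3
    rw [sqrt30_eq] at e2 e3
    have hs2 : Real.sqrt 2 ^ 2 = 2 := Real.sq_sqrt (by norm_num)
    have hs5 : Real.sqrt 5 ^ 2 = 5 := Real.sq_sqrt (by norm_num)
    have hs6 : Real.sqrt 6 ^ 2 = 6 := Real.sq_sqrt (by norm_num)
    have h1 : -5*Real.sqrt 2 + (24 - 2*l)*t1 + 3*(Real.sqrt 2*Real.sqrt 5)*t3 = 0 := by
      linear_combination e1
    have h2 : 9*Real.sqrt 6 + (24 - 2*l)*t2 + (Real.sqrt 6*Real.sqrt 5)*t3 = 0 := by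
      linear_combination e2
    have h3 : 6*Real.sqrt 5 + 3*(Real.sqrt 2*Real.sqrt 5)*t1 + (Real.sqrt 6*Real.sqrt 5)*t2
        - (34 - (24 - 2*l))*t3 = 0 := by
      linear_combination e3
    obtain ⟨hG, hp⟩ := forward_aux hs2 hs5 hs6 h1 h2 h3 e4
    have hbox := pp_root_loc hp
    have hD := D_pos hbox
    have hm0 : (24 - 2*l) ≠ 0 := by
      rcases hbox with ⟨u, v⟩ | ⟨u, v⟩
      · intro hz; rw [hz] at v; norm_num at v
      · intro hz; rw [hz] at u; norm_num at u
    have hxeq : ((t1, t2, t3, l) : ℝ × ℝ × ℝ × ℝ) = sol (24 - 2*l) :=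
      forward_eq rfl (ne_of_gt hD) hm0 h1 h2 hG
    rcases hbox with ⟨u, v⟩ | ⟨u, v⟩
    · left
      rw [hxeq, pp_inj_box (le_of_lt u) (le_of_lt v) (le_of_lt h11) (le_of_lt h12)
        (Or.inl ⟨rfl, rfl⟩) hp hp1]
    · right
      rw [hxeq, pp_inj_box (le_of_lt u) (le_of_lt v) (le_of_lt h21) (le_of_lt h22)
        (Or.inr ⟨rfl, rfl⟩) hp hp2]
  refine ⟨sol r1, sol r2, ?_, ?_, ?_⟩
  · intro h; rw [h] at hb1; linarith
  · intro x
    constructor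
    · exact hfwd x
    · rintro (rfl | rfl)
      exacts [hsat1, hsat2]
  · intro x hx
    rcases hfwd x hx with rfl | rfl
    · exact Or.inl hb1
    · exact Or.inr hb2
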